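/- arXiv:1803.10765 — 3 statements merged into one kernel-verified Lean document; each statement's English description precedes it below -/
import Mathlib

section
/- For an n×n complex matrix A and z ∈ ℂ, the following are equivalent: (a) z is an eigenvalue of A + εv₂v₁* for some vectors v₁, v₂ with ‖v₁‖ ≤ 1, ‖v₂‖ ≤ 1; (b) z is an eigenvalue of A + εE for some matrix E with ‖E‖ ≤ 1. -/
/-!
The rank-one matrix `v₂v₁*` is the operator `w ↦ ⟪v₁, w⟫ v₂`, of norm `‖v₂‖‖v₁‖ ≤ 1`.
Conversely, if `(A + εE)v = zv`, let `u = v/‖v‖`: the rank-one operator `w ↦ ⟪u, w⟫ Eu` agrees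
with `E` at `v`, so `v` stays an eigenvector, and `‖Eu‖ ≤ ‖E‖ ≤ 1`.
-/

noncomputable def matCLM {n : ℕ} (A : Matrix (Fin n) (Fin n) ℂ) :
    EuclideanSpace ℂ (Fin n) →L[ℂ] EuclideanSpace ℂ (Fin n) :=
  Matrix.toEuclideanCLM (𝕜 := ℂ) A

noncomputable def matOpNorm {n : ℕ} (A : Matrix (Fin n) (Fin n) ℂ) : ℝ := ‖matCLM A‖

def IsEigOf {n : ℕ} (A : Matrix (Fin n) (Fin n) ℂ) (z : ℂ) : Prop :=
  ∃ v : Fin n → ℂ, v ≠ 0 ∧ A.mulVec v = z • v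

open Matrix InnerProductSpace WithLp
open NormedSpace (normalize)

section normalize

variable {𝕜 E : Type*} [RCLike 𝕜] [NormedAddCommGroup E]
  [InnerProductSpace 𝕜 E] [NormedSpace ℝ E] [IsScalarTower ℝ 𝕜 E]

theorem norm_normalize_le (v : E) : ‖normalize v‖ ≤ 1 := by
  by_cases hv : v = 0
  · simp [hv]
  · exact (NormedSpace.norm_normalize hv).le

theorem inner_normalize_self (v : E) : inner 𝕜 (normalize v) v = (‖v‖ : 𝕜) := by
  rw [NormedSpace.normalize, RCLike.real_smul_eq_coe_smul (K := 𝕜), inner_smul_real_left,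
    inner_self_eq_norm_sq_to_K]
  by_cases hv : v = 0
  · simp [hv]
  · have : (‖v‖ : 𝕜) ≠ 0 := by simpa using hv
    rw [RCLike.real_smul_eq_coe_mul]
    push_cast
    field_simp

theorem rankOne_normalize_apply_self {F : Type*} [NormedAddCommGroup F] [NormedSpace 𝕜 F]
    (T : E →L[𝕜] F) (v : E) : rankOne 𝕜 (T (normalize v)) (normalize v) v = T v := by
  rw [rankOne_apply, ← map_smul, inner_normalize_self, ← RCLike.real_smul_eq_coe_smul (K := 𝕜),
    NormedSpace.norm_smul_normalize]

end normalize

theorem Matrix.toEuclideanCLM_vecMulVec {𝕜 ι : Type*} [RCLike 𝕜] [Fintype ι] [DecidableEq ι]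
    (x y : EuclideanSpace 𝕜 ι) :
    toEuclideanCLM (𝕜 := 𝕜) (vecMulVec (ofLp x) (star (ofLp y))) = rankOne 𝕜 x y := by
  ext w i
  simp [vecMulVec_mulVec, EuclideanSpace.inner_eq_star_dotProduct, dotProduct_comm, mul_comm]

theorem Matrix.vecMulVec_normalize_mulVec_self {𝕜 ι : Type*} [RCLike 𝕜] [Fintype ι]
    [DecidableEq ι] (E : Matrix ι ι 𝕜) (v : ι → 𝕜) :
    vecMulVec (ofLp (toEuclideanCLM (𝕜 := 𝕜) E (normalize (toLp 2 v))))
        (star (ofLp (normalize (toLp 2 v)))) *ᵥ v = E *ᵥ v := by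
  simpa [← toEuclideanCLM_vecMulVec] using
    congrArg ofLp (rankOne_normalize_apply_self (toEuclideanCLM (𝕜 := 𝕜) E) (toLp 2 v))

theorem stmt4_general {n : ℕ} (A : Matrix (Fin n) (Fin n) ℂ) (z : ℂ) (ε : ℝ) :
    (∃ v₁ v₂ : EuclideanSpace ℂ (Fin n), ‖v₁‖ ≤ 1 ∧ ‖v₂‖ ≤ 1 ∧
        IsEigOf (A + ε • Matrix.vecMulVec ((WithLp.equiv 2 (Fin n → ℂ)) v₂)
          (star ((WithLp.equiv 2 (Fin n → ℂ)) v₁))) z) ↔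
      (∃ E : Matrix (Fin n) (Fin n) ℂ, matOpNorm E ≤ 1 ∧ IsEigOf (A + ε • E) z) := by
  constructor
  · rintro ⟨v₁, v₂, hv₁, hv₂, hz⟩
    refine ⟨_, ?_, hz⟩
    rw [matOpNorm, matCLM, WithLp.equiv_apply, WithLp.equiv_apply, toEuclideanCLM_vecMulVec,
      norm_rankOne]
    exact mul_le_one₀ hv₂ (norm_nonneg _) hv₁
  · rintro ⟨E, hE, v, hv, hz⟩
    set u := normalize (toLp 2 v)
    refine ⟨u, matCLM E u, norm_normalize_le _, ?_, v, hv, ?_⟩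
    · calc ‖matCLM E u‖ ≤ ‖matCLM E‖ * ‖u‖ := (matCLM E).le_opNorm u
        _ ≤ 1 := mul_le_one₀ hE (norm_nonneg _) (norm_normalize_le _)
    · rw [← hz, add_mulVec, add_mulVec, smul_mulVec, smul_mulVec, WithLp.equiv_apply,
        WithLp.equiv_apply, matCLM, vecMulVec_normalize_mulVec_self]

theorem stmt4 {n : ℕ} (A : Matrix (Fin n) (Fin n) ℂ) (z : ℂ) (ε : ℝ) (hε : 0 ≤ ε) :
    (∃ v₁ v₂ : EuclideanSpace ℂ (Fin n), ‖v₁‖ ≤ 1 ∧ ‖v₂‖ ≤ 1 ∧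
        IsEigOf (A + ε • Matrix.vecMulVec ((WithLp.equiv 2 (Fin n → ℂ)) v₂)
          (star ((WithLp.equiv 2 (Fin n → ℂ)) v₁))) z) ↔
      (∃ E : Matrix (Fin n) (Fin n) ℂ, matOpNorm E ≤ 1 ∧ IsEigOf (A + ε • E) z) :=
  stmt4_general A z ε
end

section
/- Let ε̄ > 0 and A ∈ ℂ^{n×n}. If inf over y ∈ ℝ of ε_b(iy) ≥ ε̄ and all eigenvalues of A have negative real part, then for every matrix E with ‖E‖ < ε̄, every eigenvalue of A + E has negative real part. -/
noncomputable def smallestSingVal {n : ℕ} (A : Matrix (Fin n) (Fin n) ℂ) : ℝ :=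
  sInf {r : ℝ | ∃ u : EuclideanSpace ℂ (Fin n), ‖u‖ = 1 ∧ r = ‖matCLM A u‖}

/-
A perturbation of size less than `ε'` cannot put an eigenvalue `iy` on the imaginary axis:
an eigenvector `v` of `A + E` for `iy` gives `‖(A - iy) v‖ = ‖E v‖ < ε' ‖v‖`, contradicting
the singular value bound. Along the path `A + tE`, `t ∈ [0, 1]`, the set of parameters where some
eigenvalue has positive real part is open (eigenvalues move continuously, via the factorisation
of the characteristic polynomial) and the set where some eigenvalue has nonnegative real part is
closed (eigenvalues stay bounded by the operator norm, so a compactness argument applies). On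
`[0, 1]` the two sets agree, so by connectedness they contain either all of `[0, 1]` or none of
it, and `t = 0` is not in them.
-/

open Topology Set

section

variable {n : ℕ}

lemma continuous_matOpNorm : Continuous (matOpNorm (n := n)) :=
  continuous_norm.comp <| LinearMap.continuous_of_finiteDimensional
    (Matrix.toEuclideanCLM (n := Fin n) (𝕜 := ℂ)).toAlgEquiv.toLinearMap

lemma matOpNorm_smul (c : ℂ) (M : Matrix (Fin n) (Fin n) ℂ) :
    matOpNorm (c • M) = ‖c‖ * matOpNorm M := by
  simp only [matOpNorm, matCLM, map_smul, norm_smul]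

lemma smallestSingVal_mul_norm_le (M : Matrix (Fin n) (Fin n) ℂ)
    (u : EuclideanSpace ℂ (Fin n)) :
    smallestSingVal M * ‖u‖ ≤ ‖matCLM M u‖ := by
  rcases eq_or_ne u 0 with rfl | hu
  · simp
  have hu' : ‖u‖ ≠ 0 := norm_ne_zero_iff.2 hu
  have hle : smallestSingVal M ≤ ‖matCLM M ((‖u‖⁻¹ : ℂ) • u)‖ :=
    csInf_le ⟨0, by rintro r ⟨-, -, rfl⟩; positivity⟩ ⟨_, by simp [norm_smul, hu'], rfl⟩
  rw [map_smul, norm_smul, norm_inv, Complex.norm_real, norm_norm] at hle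
  rwa [inv_mul_eq_div, le_div_iff₀ (norm_pos_iff.2 hu)] at hle

lemma isEigOf_iff_det_sub_smul_one_eq_zero (M : Matrix (Fin n) (Fin n) ℂ) (z : ℂ) :
    IsEigOf M z ↔ (M - z • 1).det = 0 := by
  rw [← Matrix.exists_mulVec_eq_zero_iff]
  refine exists_congr fun v => and_congr_right fun _ => ?_
  rw [Matrix.sub_mulVec, sub_eq_zero, Matrix.smul_mulVec, Matrix.one_mulVec]

lemma isEigOf_iff_isRoot_charpoly (M : Matrix (Fin n) (Fin n) ℂ) (z : ℂ) :
    IsEigOf M z ↔ M.charpoly.IsRoot z := by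
  rw [isEigOf_iff_det_sub_smul_one_eq_zero, Polynomial.IsRoot.def, Matrix.eval_charpoly,
    ← neg_sub, Matrix.det_neg]
  simp [Matrix.smul_one_eq_diagonal, Matrix.scalar_apply]

lemma IsEigOf.exists_eigenvector {M : Matrix (Fin n) (Fin n) ℂ} {z : ℂ} (h : IsEigOf M z) :
    ∃ u : EuclideanSpace ℂ (Fin n), u ≠ 0 ∧ matCLM M u = z • u := by
  obtain ⟨v, hv, hMv⟩ := h
  exact ⟨WithLp.toLp 2 v, by simpa using hv, by simp [matCLM, Matrix.toEuclideanCLM_toLp, hMv]⟩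

lemma IsEigOf.norm_le_matOpNorm {M : Matrix (Fin n) (Fin n) ℂ} {z : ℂ} (h : IsEigOf M z) :
    ‖z‖ ≤ matOpNorm M := by
  obtain ⟨u, hu, hMu⟩ := h.exists_eigenvector
  have hle := (matCLM M).le_opNorm u
  rw [hMu, norm_smul] at hle
  exact le_of_mul_le_mul_right hle (norm_pos_iff.2 hu)

lemma IsEigOf.add_of_sub_smul_one {M : Matrix (Fin n) (Fin n) ℂ} {z r : ℂ}
    (h : IsEigOf (M - z • 1) r) : IsEigOf M (z + r) := by
  obtain ⟨v, hv, hMv⟩ := h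
  refine ⟨v, hv, ?_⟩
  rw [Matrix.sub_mulVec, Matrix.smul_mulVec, Matrix.one_mulVec, sub_eq_iff_eq_add] at hMv
  rw [hMv, add_smul, add_comm]

lemma not_isEigOf_add_of_matOpNorm_lt {A E : Matrix (Fin n) (Fin n) ℂ} {z : ℂ}
    (hE : matOpNorm E < smallestSingVal (A - z • 1)) : ¬ IsEigOf (A + E) z := by
  intro h
  obtain ⟨u, hu, hAEu⟩ := h.exists_eigenvector
  have hshift : matCLM (A - z • 1) u = -matCLM E u := by
    simp only [matCLM, map_add, map_sub, map_smul, map_one] at hAEu ⊢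
    simp [← hAEu]
  have hle : smallestSingVal (A - z • 1) * ‖u‖ ≤ matOpNorm E * ‖u‖ :=
    calc _ ≤ ‖matCLM (A - z • 1) u‖ := smallestSingVal_mul_norm_le _ u
      _ = ‖matCLM E u‖ := by rw [hshift, norm_neg]
      _ ≤ _ := (matCLM E).le_opNorm u
  exact (mul_lt_mul_of_pos_right hE (norm_pos_iff.2 hu)).not_ge hle

lemma exists_isEigOf_norm_sub_lt_of_norm_det_lt (M : Matrix (Fin n) (Fin n) ℂ) (z : ℂ)
    {δ : ℝ} (hδ : 0 ≤ δ) (h : ‖(M - z • 1).det‖ < δ ^ n) :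
    ∃ w, IsEigOf M w ∧ ‖w - z‖ < δ := by
  by_contra! hfar
  set roots := (M - z • 1).charpoly.roots
  have hcard : Multiset.card roots = n := by
    rw [IsAlgClosed.card_roots_eq_natDegree, Matrix.charpoly_natDegree_eq_dim, Fintype.card_fin]
  have hroots : ∀ r ∈ roots, δ ≤ ‖r‖ := fun r hr => by
    have hr_eig := (isEigOf_iff_isRoot_charpoly _ r).2 (Polynomial.isRoot_of_mem_roots hr)
    simpa using hfar _ hr_eig.add_of_sub_smul_one
  refine h.not_ge ?_
  calc δ ^ n = (roots.map fun _ => δ).prod := by simp [hcard]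
    _ ≤ (roots.map (‖·‖)).prod :=
      Multiset.prod_map_le_prod_map₀ _ _ (fun _ _ => hδ) hroots
    _ = ‖(M - z • 1).det‖ := by
      rw [Matrix.det_eq_prod_roots_charpoly]; exact (map_multiset_prod normHom roots).symm

variable {X : Type*} [TopologicalSpace X] {M : X → Matrix (Fin n) (Fin n) ℂ}

lemma IsEigOf.eventually_exists_isEigOf_mem (hM : Continuous M) {x : X} {z : ℂ}
    (hz : IsEigOf (M x) z) {U : Set ℂ} (hU : U ∈ 𝓝 z) :
    ∀ᶠ y in 𝓝 x, ∃ w ∈ U, IsEigOf (M y) w := by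
  obtain ⟨δ, hδ, hball⟩ := Metric.mem_nhds_iff.1 hU
  have hdet : Continuous fun y => ‖(M y - z • 1).det‖ :=
    (hM.sub continuous_const).matrix_det.norm
  have hsmall : ∀ᶠ y in 𝓝 x, ‖(M y - z • 1).det‖ < δ ^ n :=
    hdet.continuousAt.eventually_lt continuousAt_const <| by
      simpa [(isEigOf_iff_det_sub_smul_one_eq_zero _ _).1 hz] using pow_pos hδ n
  filter_upwards [hsmall] with y hy
  obtain ⟨w, hw, hwz⟩ := exists_isEigOf_norm_sub_lt_of_norm_det_lt (M y) z hδ.le hy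
  exact ⟨w, hball (by rwa [Metric.mem_ball, dist_eq_norm]), hw⟩

lemma IsCompact.isClosed_setOf_exists_isEigOf_mem [T2Space X] {K : Set X} (hK : IsCompact K)
    (hM : Continuous M) {F : Set ℂ} (hF : IsClosed F) :
    IsClosed {x | x ∈ K ∧ ∃ z ∈ F, IsEigOf (M x) z} := by
  obtain ⟨R, hR⟩ :=
    hK.exists_bound_of_continuousOn (continuous_matOpNorm.comp hM).continuousOn
  let C : Set (X × ℂ) :=
    K ×ˢ Metric.closedBall 0 R ∩ {p | p.2 ∈ F ∧ (M p.1 - p.2 • 1).det = 0}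
  have hC : IsCompact C := (hK.prod (isCompact_closedBall 0 R)).inter_right <|
    (hF.preimage continuous_snd).inter <| isClosed_eq
      ((hM.comp continuous_fst).sub (continuous_snd.smul continuous_const)).matrix_det
      continuous_const
  convert (hC.image continuous_fst).isClosed using 1
  ext x
  constructor
  · rintro ⟨hx, z, hzF, hz⟩
    have hzR : ‖z‖ ≤ R := hz.norm_le_matOpNorm.trans ((le_abs_self _).trans (hR x hx))
    exact ⟨(x, z), ⟨⟨hx, mem_closedBall_zero_iff.2 hzR⟩, hzF,
      (isEigOf_iff_det_sub_smul_one_eq_zero _ _).1 hz⟩, rfl⟩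
  · rintro ⟨⟨x, z⟩, ⟨⟨hx, -⟩, hzF, hdet⟩, rfl⟩
    exact ⟨hx, z, hzF, (isEigOf_iff_det_sub_smul_one_eq_zero _ _).2 hdet⟩

lemma re_lt_zero_of_isEigOf_of_continuous {M : ℝ → Matrix (Fin n) (Fin n) ℂ}
    (hM : Continuous M) (hstart : ∀ z, IsEigOf (M 0) z → z.re < 0)
    (haxis : ∀ t ∈ Icc (0 : ℝ) 1, ∀ z, IsEigOf (M t) z → z.re ≠ 0) :
    ∀ z, IsEigOf (M 1) z → z.re < 0 := by
  have hpos : ∀ t ∈ Icc (0 : ℝ) 1, ∀ z, IsEigOf (M t) z → 0 ≤ z.re → 0 < z.re :=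
    fun t ht z hz hre => lt_of_le_of_ne hre (haxis t ht z hz).symm
  intro z₁ hz₁
  by_contra! hre
  let U := {t | ∃ z ∈ {z : ℂ | 0 < z.re}, IsEigOf (M t) z}
  let T := {t | t ∈ Icc (0 : ℝ) 1 ∧ ∃ z ∈ {z : ℂ | 0 ≤ z.re}, IsEigOf (M t) z}
  have hU : IsOpen U := isOpen_iff_mem_nhds.2 fun _ ⟨_, hz, hzt⟩ =>
    hzt.eventually_exists_isEigOf_mem hM
      ((isOpen_lt continuous_const Complex.continuous_re).mem_nhds hz)
  have hT : IsClosed T := isCompact_Icc.isClosed_setOf_exists_isEigOf_mem hM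
    (isClosed_le continuous_const Complex.continuous_re)
  have hcover : Icc (0 : ℝ) 1 ⊆ U ∪ Tᶜ := by
    intro t ht
    by_cases htT : t ∈ T
    · obtain ⟨-, z, hz, hzt⟩ := htT
      exact Or.inl ⟨z, hpos t ht z hzt hz, hzt⟩
    · exact Or.inr htT
  have h1 : (1 : ℝ) ∈ Icc (0 : ℝ) 1 := right_mem_Icc.2 zero_le_one
  obtain ⟨t, ht, ⟨z, hz, hzt⟩, htT⟩ := isPreconnected_Icc U Tᶜ hU hT.isOpen_compl hcover
    ⟨1, h1, z₁, hpos 1 h1 z₁ hz₁ hre, hz₁⟩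
    ⟨0, left_mem_Icc.2 zero_le_one, fun ⟨_, z, hz, hzt⟩ => (hstart z hzt).not_ge hz⟩
  exact htT ⟨ht, z, show 0 ≤ z.re from le_of_lt hz, hzt⟩

end

theorem stmt7_general {n : ℕ} (A : Matrix (Fin n) (Fin n) ℂ) (ε' : ℝ)
    (hb : ∀ y : ℝ,
      ε' ≤ smallestSingVal (A - ((y : ℂ) * Complex.I) • (1 : Matrix (Fin n) (Fin n) ℂ)))
    (hstab : ∀ z : ℂ, IsEigOf A z → z.re < 0) :
    ∀ E : Matrix (Fin n) (Fin n) ℂ, matOpNorm E < ε' →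
      ∀ z : ℂ, IsEigOf (A + E) z → z.re < 0 := by
  intro E hE
  have hpath : Continuous fun t : ℝ => A + (t : ℂ) • E := by fun_prop
  suffices haxis :
      ∀ t ∈ Icc (0 : ℝ) 1, ∀ z, IsEigOf (A + (t : ℂ) • E) z → z.re ≠ 0 by
    simpa using re_lt_zero_of_isEigOf_of_continuous hpath (by simpa using hstab) haxis
  rintro t ⟨ht₀, ht₁⟩ z hz hre
  have hz_axis : z = (z.im : ℂ) * Complex.I := Complex.ext (by simp [hre]) (by simp)
  refine not_isEigOf_add_of_matOpNorm_lt ?_ hz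
  calc matOpNorm ((t : ℂ) • E) ≤ matOpNorm E := by
        rw [matOpNorm_smul, Complex.norm_real, Real.norm_eq_abs, abs_of_nonneg ht₀]
        exact mul_le_of_le_one_left (norm_nonneg _) ht₁
    _ < ε' := hE
    _ ≤ smallestSingVal (A - z • 1) := hz_axis ▸ hb z.im

theorem stmt7 {n : ℕ} (A : Matrix (Fin n) (Fin n) ℂ) (ε' : ℝ) (hε' : 0 < ε')
    (hb : ∀ y : ℝ,
      ε' ≤ smallestSingVal (A - ((y : ℂ) * Complex.I) • (1 : Matrix (Fin n) (Fin n) ℂ)))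
    (hstab : ∀ z : ℂ, IsEigOf A z → z.re < 0) :
    ∀ E : Matrix (Fin n) (Fin n) ℂ, matOpNorm E < ε' →
      ∀ z : ℂ, IsEigOf (A + E) z → z.re < 0 :=
  stmt7_general A ε' hb hstab
end

section
/- Let M be positive definite self-adjoint with M = F*F, F invertible. For A ∈ ℂ^{n×n}, z ∈ ℂ, ε ≥ 0: there exists u with u*Mu = 1 and u*(A − zM)* M^{-1} (A − zM) u ≤ ε² if and only if the smallest singular value of F^{-*}AF^{-1} − zI is at most ε. -/
open Matrix
open scoped ComplexOrder

/-! Writing `M = FᴴF` and `B = F⁻ᴴ A F⁻¹ - z`, one has `A - zM = Fᴴ B F`, hence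
`(A - zM)ᴴ M⁻¹ (A - zM) = (BF)ᴴ (BF)`. The substitution `v = F u` therefore turns
`uᴴ M u` into `‖v‖²` and the quadratic form into `‖B v‖²`, and the condition becomes
`‖B v‖ ≤ ε` for some unit vector `v`; this is `σ_min(B) ≤ ε` because the infimum over the
compact unit sphere is attained. -/

namespace Matrix

variable {𝕜 m n : Type*} [RCLike 𝕜] [Fintype m] [Fintype n]

theorem dotProduct_conjTranspose_mul_self_mulVec (C : Matrix m n 𝕜) (x : n → 𝕜) :
    star x ⬝ᵥ (Cᴴ * C) *ᵥ x = (‖WithLp.toLp 2 (C *ᵥ x)‖ : 𝕜) ^ 2 := by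
  rw [← mulVec_mulVec, dotProduct_mulVec, ← star_mulVec, dotProduct_comm,
    ← EuclideanSpace.inner_toLp_toLp, inner_self_eq_norm_sq_to_K]

section Congruence

variable {R : Type*} [CommRing R] [StarRing R] [DecidableEq n]

theorem conjTranspose_mul_inv_conjTranspose_mul_self_mul (F C : Matrix n n R)
    (hF : IsUnit F.det) :
    (Fᴴ * C)ᴴ * (Fᴴ * F)⁻¹ * (Fᴴ * C) = Cᴴ * C := by
  have hFH : IsUnit Fᴴ.det := by rw [det_conjTranspose]; exact hF.star
  rw [conjTranspose_mul, conjTranspose_conjTranspose, mul_inv_rev]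
  simp only [← Matrix.mul_assoc]
  rw [Matrix.mul_assoc _ F, mul_nonsing_inv F hF, Matrix.mul_one, Matrix.mul_assoc _ _ Fᴴ,
    nonsing_inv_mul _ hFH, Matrix.mul_one]

theorem sub_smul_conjTranspose_mul_self (A F : Matrix n n R) (z : R)
    (hF : IsUnit F.det) :
    A - z • (Fᴴ * F) = Fᴴ * (((Fᴴ)⁻¹ * A * F⁻¹ - z • 1) * F) := by
  have hFH : IsUnit Fᴴ.det := by rw [det_conjTranspose]; exact hF.star
  rw [sub_mul, mul_sub, Matrix.mul_assoc, Matrix.mul_assoc, nonsing_inv_mul F hF, Matrix.mul_one,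
    ← Matrix.mul_assoc, mul_nonsing_inv _ hFH, Matrix.one_mul, smul_mul, Matrix.one_mul,
    Matrix.mul_smul]

end Congruence

end Matrix

theorem smallestSingVal_le_iff {n : ℕ} (hn : 0 < n) (B : Matrix (Fin n) (Fin n) ℂ) (ε : ℝ) :
    smallestSingVal B ≤ ε ↔ ∃ v : EuclideanSpace ℂ (Fin n), ‖v‖ = 1 ∧ ‖matCLM B v‖ ≤ ε := by
  have : Nonempty (Fin n) := ⟨⟨0, hn⟩⟩
  have hS : {r : ℝ | ∃ u : EuclideanSpace ℂ (Fin n), ‖u‖ = 1 ∧ r = ‖matCLM B u‖} =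
      (fun u => ‖matCLM B u‖) '' Metric.sphere 0 1 := by
    ext r
    simp [eq_comm]
  have hcpt : IsCompact ((fun u => ‖matCLM B u‖) '' Metric.sphere 0 1) :=
    (isCompact_sphere 0 1).image (matCLM B).continuous.norm
  have hne : ((fun u => ‖matCLM B u‖) '' Metric.sphere 0 1).Nonempty :=
    (NormedSpace.sphere_nonempty.2 zero_le_one).image _
  rw [smallestSingVal, hS]
  constructor
  · intro h
    obtain ⟨v, hv, hv_eq⟩ := hcpt.sInf_mem hne
    exact ⟨v, by simpa using hv, hv_eq.trans_le h⟩
  · rintro ⟨v, hv, hle⟩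
    exact (csInf_le hcpt.bddBelow ⟨v, by simpa using hv, rfl⟩).trans hle

theorem stmt12_general {n : ℕ} (hn : 0 < n) (A F M : Matrix (Fin n) (Fin n) ℂ)
    (hF : IsUnit F.det) (hMF : M = Fᴴ * F) (z : ℂ) (ε : ℝ) (hε : 0 ≤ ε) :
    (∃ u : Fin n → ℂ, star u ⬝ᵥ M.mulVec u = 1 ∧
        (star u ⬝ᵥ ((A - z • M)ᴴ * M⁻¹ * (A - z • M)).mulVec u).re ≤ ε ^ 2) ↔
      smallestSingVal ((Fᴴ)⁻¹ * A * F⁻¹ - z • (1 : Matrix (Fin n) (Fin n) ℂ)) ≤ ε := by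
  subst hMF
  set B := (Fᴴ)⁻¹ * A * F⁻¹ - z • (1 : Matrix (Fin n) (Fin n) ℂ)
  have hquad (u : Fin n → ℂ) :
      star u ⬝ᵥ ((A - z • (Fᴴ * F))ᴴ * (Fᴴ * F)⁻¹ * (A - z • (Fᴴ * F))) *ᵥ u =
        (‖matCLM B (WithLp.toLp 2 (F *ᵥ u))‖ : ℂ) ^ 2 := by
    rw [sub_smul_conjTranspose_mul_self A F z hF,
      conjTranspose_mul_inv_conjTranspose_mul_self_mul _ _ hF,
      dotProduct_conjTranspose_mul_self_mulVec, ← mulVec_mulVec]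
    rfl
  have hsurj : Function.Surjective fun u => WithLp.toLp 2 (F *ᵥ u) :=
    (WithLp.equiv 2 _).symm.surjective.comp
      (mulVec_surjective_iff_isUnit.2 ((isUnit_iff_isUnit_det F).2 hF))
  simp_rw [hquad, dotProduct_conjTranspose_mul_self_mulVec, smallestSingVal_le_iff hn]
  rw [hsurj.exists (p := fun v => ‖v‖ = 1 ∧ ‖matCLM B v‖ ≤ ε)]
  refine exists_congr fun u => and_congr ?_ ?_
  · rw [← RCLike.ofReal_pow, ← RCLike.ofReal_one, RCLike.ofReal_inj,
      pow_eq_one_iff_of_nonneg (norm_nonneg _) two_ne_zero]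
  · rw [← Complex.ofReal_pow, Complex.ofReal_re,
      pow_le_pow_iff_left₀ (norm_nonneg _) hε two_ne_zero]

theorem stmt12 {n : ℕ} (hn : 0 < n) (A F M : Matrix (Fin n) (Fin n) ℂ)
    (hM : M.PosDef) (hF : IsUnit F.det) (hMF : M = Fᴴ * F) (z : ℂ) (ε : ℝ) (hε : 0 ≤ ε) :
    (∃ u : Fin n → ℂ, star u ⬝ᵥ M.mulVec u = 1 ∧
        (star u ⬝ᵥ ((A - z • M)ᴴ * M⁻¹ * (A - z • M)).mulVec u).re ≤ ε ^ 2) ↔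
      smallestSingVal ((Fᴴ)⁻¹ * A * F⁻¹ - z • (1 : Matrix (Fin n) (Fin n) ℂ)) ≤ ε :=
  stmt12_general hn A F M hF hMF z ε hε
end
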